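/- arXiv:1509.07495 — 2 statements merged into one kernel-verified Lean document; each statement's English description precedes it below -/
import Mathlib

section
/- Let C be a finite set of counters and π ∈ Ops(C)^*. If π transfers counter c to counter d with m increments, then for every counter valuation ν : C → ℕ one has νπ(d) ≥ ν(c) + m. In particular, if π is a c-trace of length m, then νπ(c) ≥ m for every counter valuation ν. -/
/-- Counter operations over a set `C` of counters. -/
inductive CounterOp (C : Type*) where
  | inc : C → CounterOp C
  | reset : C → CounterOp C
  | max : C → C → C → CounterOp C

/-- Applying a single counter operation to a counter valuation. -/
def applyOp {C : Type*} [DecidableEq C] (ν : C → ℕ) : CounterOp C → C → ℕ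
  | .inc c => Function.update ν c (ν c + 1)
  | .reset c => Function.update ν c 0
  | .max c c₀ c₁ => Function.update ν c (Nat.max (ν c₀) (ν c₁))

/-- Applying a finite sequence of counter operations to a counter valuation. -/
def applyOps {C : Type*} [DecidableEq C] (ν : C → ℕ) : List (CounterOp C) → C → ℕ
  | [] => ν
  | op :: π => applyOps (applyOp ν op) π

/-- The transfer relation of a single counter operation. -/
def opTransfers {C : Type*} : CounterOp C → C → C → Prop
  | .inc _, c, d => c = d
  | .reset e, c, d => c = d ∧ c ≠ e
  | .max e c₀ c₁, c, d => (c = d ∧ c ≠ e) ∨ ((c = c₀ ∨ c = c₁) ∧ d = e)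

/-- `Transfers π c d`: the sequence `π` of counter operations transfers counter `c`
to counter `d`. -/
def Transfers {C : Type*} : List (CounterOp C) → C → C → Prop
  | [], c, d => c = d
  | op :: π, c, d => ∃ e, opTransfers op c e ∧ Transfers π e d

/-- `TransfersWith π c d m`: `π` transfers `c` to `d` with `m` increments, i.e. `π`
decomposes as `π₀ (inc e₁) π₁ ⋯ (inc e_m) π_m` with `π₀` transferring `c` to `e₁`,
`π_j` transferring `e_j` to `e_{j+1}`, and `π_m` transferring `e_m` to `d`. -/
inductive TransfersWith {C : Type*} : List (CounterOp C) → C → C → ℕ → Prop where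
  | zero {π : List (CounterOp C)} {c d : C} :
      Transfers π c d → TransfersWith π c d 0
  | step {π₀ π : List (CounterOp C)} {c e d : C} {m : ℕ} :
      Transfers π₀ c e → TransfersWith π e d m →
      TransfersWith (π₀ ++ CounterOp.inc e :: π) c d (m + 1)

/-- `π` is a `c`-trace of length `m`: it transfers some counter to `c` with `m` increments. -/
def IsTrace {C : Type*} (π : List (CounterOp C)) (c : C) (m : ℕ) : Prop :=
  ∃ c', TransfersWith π c' c m

/-- A (deterministic, complete) max-automaton with states `Q`, counters `C` and
input alphabet `S`: each transition is labeled by a finite sequence of counter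
operations, and the acceptance condition is a boolean combination of the
per-counter conditions "`limsup ρ_c < ∞`". -/
structure MaxAutomaton (S Q C : Type*) where
  init : Q
  step : Q → S → Q
  label : Q → S → List (CounterOp C)
  acc : (C → Prop) → Prop

namespace MaxAutomaton

variable {S Q C : Type*}

/-- The state of the (unique) run on `α` after `n` letters. -/
def stateAt (A : MaxAutomaton S Q C) (α : ℕ → S) : ℕ → Q
  | 0 => A.init
  | n + 1 => A.step (stateAt A α n) (α n)

/-- The counter valuation reached on the run on `α` after applying all operations
of the first `n` transition labels, starting from the zero valuation. -/
def valSeq [DecidableEq C] (A : MaxAutomaton S Q C) (α : ℕ → S) : ℕ → C → ℕ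
  | 0 => fun _ => 0
  | n + 1 => applyOps (valSeq A α n) (A.label (stateAt A α n) (α n))

/-- The run of `A` on `α` is accepting iff the acceptance condition is satisfied by
the assignment mapping counter `c` to true iff `limsup ρ_c < ∞`. -/
def Accepts [DecidableEq C] (A : MaxAutomaton S Q C) (α : ℕ → S) : Prop :=
  A.acc fun c => Filter.limsup (fun n => ((valSeq A α n c : ℕ) : ℕ∞)) Filter.atTop < ⊤

/-- The language of the max-automaton `A`. -/
def Lang [DecidableEq C] (A : MaxAutomaton S Q C) : Set (ℕ → S) :=
  { α | A.Accepts α }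

/-- The flattening of the labels of the first `n` transitions of the run of `A` on `α`. -/
def labelSeq (A : MaxAutomaton S Q C) (α : ℕ → S) : ℕ → List (CounterOp C)
  | 0 => []
  | n + 1 => labelSeq A α n ++ A.label (stateAt A α n) (α n)

/-- The run of `A` on `α` contains `π`: some prefix of the run ends with `π`. -/
def RunContains (A : MaxAutomaton S Q C) (α : ℕ → S) (π : List (CounterOp C)) : Prop :=
  ∃ n, π <:+ A.labelSeq α n

/-- The extended transition function `δ* : Q × Σ* → Q`. -/
def extStep (A : MaxAutomaton S Q C) : Q → List S → Q
  | q, [] => q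
  | q, a :: x => extStep A (A.step q a) x

/-- `ℓ(q, x)`: the sequence of transition labels along the run of `A` on `x` from `q`. -/
def labelsFrom (A : MaxAutomaton S Q C) : Q → List S → List (List (CounterOp C))
  | _, [] => []
  | q, a :: x => A.label q a :: labelsFrom A (A.step q a) x

end MaxAutomaton

lemma applyOps_append {C : Type*} [DecidableEq C] (ν : C → ℕ) (l₁ l₂ : List (CounterOp C)) :
    applyOps ν (l₁ ++ l₂) = applyOps (applyOps ν l₁) l₂ := by
  induction l₁ generalizing ν with
  | nil => rfl
  | cons op l ih => simp [applyOps, ih]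

lemma le_applyOp {C : Type*} [DecidableEq C] (ν : C → ℕ) (op : CounterOp C) (c e : C)
    (h : opTransfers op c e) : ν c ≤ applyOp ν op e := by
  cases op with
  | inc c' =>
    obtain rfl : c = e := h
    unfold applyOp
    by_cases hc : c = c' <;> simp [Function.update, hc]
  | reset c' =>
    obtain ⟨rfl, hne⟩ := h
    simp [applyOp, Function.update, hne]
  | max c' c₀ c₁ =>
    rcases h with ⟨rfl, hne⟩ | ⟨hc, rfl⟩
    · simp [applyOp, Function.update, hne]
    · rcases hc with rfl | rfl <;>
        simp [applyOp, Function.update, Nat.le_max_left, Nat.le_max_right]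

lemma transfers_le {C : Type*} [DecidableEq C] (π : List (CounterOp C)) (c d : C)
    (h : Transfers π c d) (ν : C → ℕ) : ν c ≤ applyOps ν π d := by
  induction π generalizing c ν with
  | nil => exact le_of_eq (congrArg ν h)
  | cons op l ih =>
    obtain ⟨e, hop, ht⟩ := h
    exact le_trans (le_applyOp ν op c e hop) (ih e ht _)

lemma transfersWith_le {C : Type*} [DecidableEq C] (π : List (CounterOp C)) (c d : C) (m : ℕ)
    (h : TransfersWith π c d m) (ν : C → ℕ) : ν c + m ≤ applyOps ν π d := by
  induction h generalizing ν with
  | zero ht => simpa using transfers_le _ _ _ ht ν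
  | @step π₀ π' c' e d' m' h₀ _ ih =>
    rw [applyOps_append]
    have h1 : ν c' + 1 ≤ applyOp (applyOps ν π₀) (CounterOp.inc e) e := by
      have := transfers_le _ _ _ h₀ ν
      simp only [applyOp, Function.update_self]
      omega
    have := ih (applyOp (applyOps ν π₀) (CounterOp.inc e))
    calc ν c' + (m' + 1) = (ν c' + 1) + m' := by ring
      _ ≤ _ := by exact le_trans (Nat.add_le_add_right h1 m') this

/-- If `π` transfers `c` to `d` with `m` increments, then applying `π` to any valuation
`ν` yields a value of `d` at least `ν c + m`; in particular a `c`-trace of length `m`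
pumps `c` up to at least `m`. -/
theorem transfersWith_le_applyOps {C : Type*} [Fintype C] [DecidableEq C] :
    (∀ (π : List (CounterOp C)) (c d : C) (m : ℕ), TransfersWith π c d m →
      ∀ ν : C → ℕ, ν c + m ≤ applyOps ν π d) ∧
    (∀ (π : List (CounterOp C)) (c : C) (m : ℕ), IsTrace π c m →
      ∀ ν : C → ℕ, m ≤ applyOps ν π c) := by
  refine ⟨fun π c d m h ν => transfersWith_le π c d m h ν, fun π c m ⟨c', h⟩ ν => ?_⟩
  have := transfersWith_le π c' c m h ν
  omega
end

section
/- Let A be a max-automaton and m ≥ 0. The relation ≡_m^ops is a congruence on Λ^*: it is an equivalence relation, and λ ≡_m^ops λ' implies λμ ≡_m^ops λ'μ for every μ ∈ Λ^*. -/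
/-- The flattening of a sequence of transition labels into a single sequence of
counter operations. -/
def flatLabels {C : Type*} (l : List (List (CounterOp C))) : List (CounterOp C) :=
  l.foldr (· ++ ·) []

/-- `l` has an infix whose flattening has a suffix that is a `c`-trace of length `m`. -/
def CondInfixTrace {C : Type*} (l : List (List (CounterOp C))) (c : C) (m : ℕ) : Prop :=
  ∃ μ, μ <:+: l ∧ ∃ π, π <:+ flatLabels μ ∧ IsTrace π c m

/-- The flattening of `l` has a suffix that is a `c`-trace of length `m`. -/
def CondSuffixTrace {C : Type*} (l : List (List (CounterOp C))) (c : C) (m : ℕ) : Prop :=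
  ∃ π, π <:+ flatLabels l ∧ IsTrace π c m

/-- The flattening of `l` transfers `c` to `d` with `m` increments. -/
def CondTransfer {C : Type*} (l : List (List (CounterOp C))) (c d : C) (m : ℕ) : Prop :=
  TransfersWith (flatLabels l) c d m

/-- `l` has a prefix whose flattening transfers `c` to `d` with `m` increments. -/
def CondPrefixTransfer {C : Type*} (l : List (List (CounterOp C))) (c d : C) (m : ℕ) : Prop :=
  ∃ μ, μ <+: l ∧ TransfersWith (flatLabels μ) c d m

/-- The equivalence `≡_m^ops` on sequences of transition labels. -/
def EqOps {C : Type*} (m : ℕ) (l l' : List (List (CounterOp C))) : Prop :=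
  ∀ (c d : C) (m' : ℕ), m' ≤ m →
    (CondInfixTrace l c m' ↔ CondInfixTrace l' c m') ∧
    (CondSuffixTrace l c m' ↔ CondSuffixTrace l' c m') ∧
    (CondTransfer l c d m' ↔ CondTransfer l' c d m') ∧
    (CondPrefixTransfer l c d m' ↔ CondPrefixTransfer l' c d m')

/-- The equivalence `≡_m` on finite words: same transition profile and
`≡_m^ops`-equivalent label sequences from every state. -/
def EqWord {S Q C : Type*} (A : MaxAutomaton S Q C) (m : ℕ) (x x' : List S) : Prop :=
  (∀ q, A.extStep q x = A.extStep q x') ∧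
  ∀ q, EqOps m (A.labelsFrom q x) (A.labelsFrom q x')

section AuxLemmas

variable {C : Type*}

lemma flat_append (a b : List (List (CounterOp C))) :
    flatLabels (a ++ b) = flatLabels a ++ flatLabels b := by
  induction a with
  | nil => rfl
  | cons x xs ih =>
    show x ++ flatLabels (xs ++ b) = (x ++ flatLabels xs) ++ flatLabels b
    rw [ih, List.append_assoc]

lemma flat_suffix {s l : List (List (CounterOp C))} (h : s <:+ l) :
    flatLabels s <:+ flatLabels l := by
  obtain ⟨p, rfl⟩ := h
  rw [flat_append]; exact List.suffix_append _ _

lemma suffix_append_iff' {α : Type*} {t a b : List α} :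
    t <:+ a ++ b ↔ t <:+ b ∨ ∃ s, s <:+ a ∧ t = s ++ b := by
  constructor
  · rintro ⟨p, hp⟩
    rcases List.append_eq_append_iff.1 hp with ⟨a', h1, h2⟩ | ⟨c', h1, h2⟩
    · exact Or.inr ⟨a', ⟨p, h1.symm⟩, h2⟩
    · exact Or.inl ⟨c', h2.symm⟩
  · rintro (h | ⟨s, ⟨p, hp⟩, rfl⟩)
    · exact h.trans (List.suffix_append a b)
    · exact ⟨p, by rw [← List.append_assoc, hp]⟩

lemma prefix_append_iff'' {α : Type*} {t a b : List α} :
    t <+: a ++ b ↔ t <+: a ∨ ∃ s, s <+: b ∧ t = a ++ s := by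
  constructor
  · rintro ⟨p, hp⟩
    rcases List.append_eq_append_iff.1 hp with ⟨a', h1, h2⟩ | ⟨c', h1, h2⟩
    · exact Or.inl ⟨a', h1.symm⟩
    · exact Or.inr ⟨c', ⟨p, h2.symm⟩, h1⟩
  · rintro (h | ⟨s, ⟨p, hp⟩, rfl⟩)
    · exact h.trans (List.prefix_append a b)
    · exact ⟨p, by rw [List.append_assoc, hp]⟩

lemma infix_append_iff' {α : Type*} {t a b : List α} :
    t <:+: a ++ b ↔ t <:+: a ∨ t <:+: b ∨ ∃ s p, s <:+ a ∧ p <+: b ∧ t = s ++ p := by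
  constructor
  · intro h
    obtain ⟨u, htu, hub⟩ := List.infix_iff_prefix_suffix.1 h
    rcases suffix_append_iff'.1 hub with h1 | ⟨s, hs, rfl⟩
    · exact Or.inr (Or.inl (List.infix_iff_prefix_suffix.2 ⟨u, htu, h1⟩))
    · rcases prefix_append_iff''.1 htu with h1 | ⟨p, hp, rfl⟩
      · exact Or.inl (List.infix_iff_prefix_suffix.2 ⟨s, h1, hs⟩)
      · exact Or.inr (Or.inr ⟨s, p, hs, hp, rfl⟩)
  · rintro (h | h | ⟨s, p, ⟨pre, rfl⟩, ⟨q, rfl⟩, rfl⟩)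
    · exact h.trans (List.prefix_append a b).isInfix
    · exact h.trans (List.suffix_append a b).isInfix
    · exact ⟨pre, q, by simp⟩

lemma transfers_append {π₁ π₂ : List (CounterOp C)} {c d : C} :
    Transfers (π₁ ++ π₂) c d ↔ ∃ e, Transfers π₁ c e ∧ Transfers π₂ e d := by
  induction π₁ generalizing c with
  | nil =>
    constructor
    · intro h; exact ⟨c, rfl, h⟩
    · rintro ⟨e, he, h⟩; rw [show c = e from he]; exact h
  | cons op π ih =>
    constructor
    · rintro ⟨e, hop, h⟩
      obtain ⟨f, h1, h2⟩ := ih.1 h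
      exact ⟨f, ⟨e, hop, h1⟩, h2⟩
    · rintro ⟨f, ⟨e, hop, h1⟩, h2⟩
      exact ⟨e, hop, ih.2 ⟨f, h1, h2⟩⟩

lemma transfersWith_nil {c d : C} {m : ℕ} :
    TransfersWith ([] : List (CounterOp C)) c d m ↔ c = d ∧ m = 0 := by
  constructor
  · intro h
    have key : ∀ L : List (CounterOp C), TransfersWith L c d m → L = [] → c = d ∧ m = 0 := by
      intro L hL
      cases hL with
      | zero h' => intro he; subst he; exact ⟨h', rfl⟩
      | step h1 h2 => intro he; simp at he
    exact key [] h rfl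
  · rintro ⟨rfl, rfl⟩; exact .zero rfl

lemma transfersWith_cons_mp {L : List (CounterOp C)} {c d : C} {m : ℕ}
    (h : TransfersWith L c d m) :
    ∀ op π, L = op :: π →
      (∃ e, opTransfers op c e ∧ TransfersWith π e d m) ∨
      (∃ m', m = m' + 1 ∧ op = CounterOp.inc c ∧ TransfersWith π c d m') := by
  cases h with
  | zero h =>
    intro op π hL; subst hL
    obtain ⟨e, h1, h2⟩ := h
    exact Or.inl ⟨e, h1, .zero h2⟩
  | @step π₀ π' c e d m h1 h2 =>
    intro op π hL
    cases π₀ with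
    | nil =>
      simp only [List.nil_append] at hL
      injection hL with hL1 hL2
      subst hL2
      have he : c = e := h1
      subst he
      exact Or.inr ⟨m, rfl, hL1.symm, h2⟩
    | cons o π₀' =>
      rw [List.cons_append] at hL
      injection hL with hL1 hL2
      subst hL1; subst hL2
      obtain ⟨f, hf1, hf2⟩ := h1
      exact Or.inl ⟨f, hf1, .step hf2 h2⟩

lemma transfersWith_cons {op : CounterOp C} {π : List (CounterOp C)} {c d : C} {m : ℕ} :
    TransfersWith (op :: π) c d m ↔
      (∃ e, opTransfers op c e ∧ TransfersWith π e d m) ∨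
      (∃ m', m = m' + 1 ∧ op = CounterOp.inc c ∧ TransfersWith π c d m') := by
  constructor
  · intro h; exact transfersWith_cons_mp h op π rfl
  · rintro (⟨e, h1, h2⟩ | ⟨m', rfl, rfl, h2⟩)
    · cases h2 with
      | zero h => exact .zero ⟨e, h1, h⟩
      | @step π₀ π₁ e f d m h3 h4 =>
        exact .step (π₀ := op :: π₀) ⟨e, h1, h3⟩ h4
    · exact .step (π₀ := []) rfl h2

lemma transfersWith_append {π₁ π₂ : List (CounterOp C)} {c d : C} {m : ℕ} :
    TransfersWith (π₁ ++ π₂) c d m ↔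
      ∃ e m₁ m₂, m₁ + m₂ = m ∧ TransfersWith π₁ c e m₁ ∧ TransfersWith π₂ e d m₂ := by
  induction π₁ generalizing c m with
  | nil =>
    simp only [List.nil_append]
    constructor
    · intro h; exact ⟨c, 0, m, by omega, .zero rfl, h⟩
    · rintro ⟨e, m₁, m₂, hm, h1, h2⟩
      obtain ⟨rfl, rfl⟩ := transfersWith_nil.1 h1
      rw [show m = m₂ by omega]
      exact h2
  | cons op π ih =>
    rw [List.cons_append, transfersWith_cons]
    constructor
    · rintro (⟨e, hop, h⟩ | ⟨m', rfl, rfl, h⟩)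
      · obtain ⟨f, m₁, m₂, hm, h1, h2⟩ := ih.1 h
        exact ⟨f, m₁, m₂, hm, transfersWith_cons.2 (Or.inl ⟨e, hop, h1⟩), h2⟩
      · obtain ⟨f, m₁, m₂, hm, h1, h2⟩ := ih.1 h
        exact ⟨f, m₁ + 1, m₂, by omega,
          transfersWith_cons.2 (Or.inr ⟨m₁, rfl, rfl, h1⟩), h2⟩
    · rintro ⟨e, m₁, m₂, rfl, h1, h2⟩
      rcases transfersWith_cons.1 h1 with ⟨f, hop, h1'⟩ | ⟨m₁', rfl, rfl, h1'⟩
      · exact Or.inl ⟨f, hop, ih.2 ⟨e, m₁, m₂, rfl, h1', h2⟩⟩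
      · exact Or.inr ⟨m₁' + m₂, by omega, rfl, ih.2 ⟨e, m₁', m₂, rfl, h1', h2⟩⟩

lemma condTransfer_append {l μ : List (List (CounterOp C))} {c d : C} {m : ℕ} :
    CondTransfer (l ++ μ) c d m ↔
      ∃ e m₁ m₂, m₁ + m₂ = m ∧ CondTransfer l c e m₁ ∧
        TransfersWith (flatLabels μ) e d m₂ := by
  unfold CondTransfer
  rw [flat_append, transfersWith_append]

lemma condPrefixTransfer_append {l μ : List (List (CounterOp C))} {c d : C} {m : ℕ} :
    CondPrefixTransfer (l ++ μ) c d m ↔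
      CondPrefixTransfer l c d m ∨
      ∃ p, p <+: μ ∧ ∃ e m₁ m₂, m₁ + m₂ = m ∧ CondTransfer l c e m₁ ∧
        TransfersWith (flatLabels p) e d m₂ := by
  unfold CondPrefixTransfer CondTransfer
  constructor
  · rintro ⟨ν, hν, hh⟩
    rcases prefix_append_iff''.1 hν with h1 | ⟨p, hp, rfl⟩
    · exact Or.inl ⟨ν, h1, hh⟩
    · rw [flat_append, transfersWith_append] at hh
      obtain ⟨e, m₁, m₂, hm, h1, h2⟩ := hh
      exact Or.inr ⟨p, hp, e, m₁, m₂, hm, h1, h2⟩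
  · rintro (⟨ν, h1, hh⟩ | ⟨p, hp, e, m₁, m₂, hm, h1, h2⟩)
    · exact ⟨ν, h1.trans (List.prefix_append l μ), hh⟩
    · refine ⟨l ++ p, ?_, ?_⟩
      · obtain ⟨q, rfl⟩ := hp; exact ⟨q, by simp⟩
      · rw [flat_append, transfersWith_append]
        exact ⟨e, m₁, m₂, hm, h1, h2⟩

lemma condSuffixTrace_append {l μ : List (List (CounterOp C))} {c : C} {m : ℕ} :
    CondSuffixTrace (l ++ μ) c m ↔
      CondSuffixTrace μ c m ∨
      ∃ e m₁ m₂, m₁ + m₂ = m ∧ CondSuffixTrace l e m₁ ∧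
        TransfersWith (flatLabels μ) e c m₂ := by
  unfold CondSuffixTrace IsTrace
  constructor
  · rintro ⟨π, hπ, c', hh⟩
    rw [flat_append] at hπ
    rcases suffix_append_iff'.1 hπ with h1 | ⟨π', hπ', rfl⟩
    · exact Or.inl ⟨π, h1, c', hh⟩
    · rw [transfersWith_append] at hh
      obtain ⟨e, m₁, m₂, hm, h1, h2⟩ := hh
      exact Or.inr ⟨e, m₁, m₂, hm, ⟨π', hπ', c', h1⟩, h2⟩
  · rintro (⟨π, h1, hh⟩ | ⟨e, m₁, m₂, hm, ⟨π', hπ', c', h1⟩, h2⟩)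
    · exact ⟨π, by rw [flat_append]; exact h1.trans (List.suffix_append _ _), hh⟩
    · refine ⟨π' ++ flatLabels μ, ?_, c', ?_⟩
      · rw [flat_append]; obtain ⟨q, hq⟩ := hπ'
        exact ⟨q, by rw [← List.append_assoc, hq]⟩
      · rw [transfersWith_append]; exact ⟨e, m₁, m₂, hm, h1, h2⟩

lemma condInfixTrace_append {l μ : List (List (CounterOp C))} {c : C} {m : ℕ} :
    CondInfixTrace (l ++ μ) c m ↔
      CondInfixTrace l c m ∨ CondInfixTrace μ c m ∨
      ∃ p, p <+: μ ∧ ∃ e m₁ m₂, m₁ + m₂ = m ∧ CondSuffixTrace l e m₁ ∧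
        TransfersWith (flatLabels p) e c m₂ := by
  unfold CondInfixTrace CondSuffixTrace IsTrace
  constructor
  · rintro ⟨ν, hν, π, hπ, c', hh⟩
    rcases infix_append_iff'.1 hν with h1 | h1 | ⟨s, p, hs, hp, rfl⟩
    · exact Or.inl ⟨ν, h1, π, hπ, c', hh⟩
    · exact Or.inr (Or.inl ⟨ν, h1, π, hπ, c', hh⟩)
    · rw [flat_append] at hπ
      rcases suffix_append_iff'.1 hπ with h2 | ⟨π', hπ', rfl⟩
      · exact Or.inr (Or.inl ⟨p, hp.isInfix, π, h2, c', hh⟩)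
      · rw [transfersWith_append] at hh
        obtain ⟨e, m₁, m₂, hm, h1', h2⟩ := hh
        exact Or.inr (Or.inr ⟨p, hp, e, m₁, m₂, hm,
          ⟨π', hπ'.trans (flat_suffix hs), c', h1'⟩, h2⟩)
  · rintro (⟨ν, h1, hrest⟩ | ⟨ν, h1, hrest⟩ |
      ⟨p, hp, e, m₁, m₂, hm, ⟨π', hπ', c', h1⟩, h2⟩)
    · exact ⟨ν, h1.trans (List.prefix_append l μ).isInfix, hrest⟩
    · exact ⟨ν, h1.trans (List.suffix_append l μ).isInfix, hrest⟩
    · refine ⟨l ++ p, ?_, π' ++ flatLabels p, ?_, c', ?_⟩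
      · obtain ⟨q, rfl⟩ := hp
        exact (show l ++ p <+: l ++ (p ++ q) from ⟨q, by simp⟩).isInfix
      · rw [flat_append]; obtain ⟨q, hq⟩ := hπ'
        exact ⟨q, by rw [← List.append_assoc, hq]⟩
      · rw [transfersWith_append]; exact ⟨e, m₁, m₂, hm, h1, h2⟩

lemma eqOps_symm {m : ℕ} {l l' : List (List (CounterOp C))} (h : EqOps m l l') :
    EqOps m l' l := fun c d m' hm' => by
  obtain ⟨h1, h2, h3, h4⟩ := h c d m' hm'
  exact ⟨h1.symm, h2.symm, h3.symm, h4.symm⟩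

lemma eqOps_infix_mp {m : ℕ} {l l' μ : List (List (CounterOp C))} (h : EqOps m l l')
    {c : C} {m' : ℕ} (hm' : m' ≤ m) (hc : CondInfixTrace (l ++ μ) c m') :
    CondInfixTrace (l' ++ μ) c m' := by
  rw [condInfixTrace_append] at hc ⊢
  rcases hc with h1 | h1 | ⟨p, hp, e, m₁, m₂, hm, h1, h2⟩
  · exact Or.inl ((h c c m' hm').1.mp h1)
  · exact Or.inr (Or.inl h1)
  · exact Or.inr (Or.inr ⟨p, hp, e, m₁, m₂, hm,
      ((h e e m₁ (by omega)).2.1).mp h1, h2⟩)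

lemma eqOps_suffix_mp {m : ℕ} {l l' μ : List (List (CounterOp C))} (h : EqOps m l l')
    {c : C} {m' : ℕ} (hm' : m' ≤ m) (hc : CondSuffixTrace (l ++ μ) c m') :
    CondSuffixTrace (l' ++ μ) c m' := by
  rw [condSuffixTrace_append] at hc ⊢
  rcases hc with h1 | ⟨e, m₁, m₂, hm, h1, h2⟩
  · exact Or.inl h1
  · exact Or.inr ⟨e, m₁, m₂, hm, ((h e e m₁ (by omega)).2.1).mp h1, h2⟩

lemma eqOps_transfer_mp {m : ℕ} {l l' μ : List (List (CounterOp C))} (h : EqOps m l l')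
    {c d : C} {m' : ℕ} (hm' : m' ≤ m) (hc : CondTransfer (l ++ μ) c d m') :
    CondTransfer (l' ++ μ) c d m' := by
  rw [condTransfer_append] at hc ⊢
  obtain ⟨e, m₁, m₂, hm, h1, h2⟩ := hc
  exact ⟨e, m₁, m₂, hm, ((h c e m₁ (by omega)).2.2.1).mp h1, h2⟩

lemma eqOps_prefix_mp {m : ℕ} {l l' μ : List (List (CounterOp C))} (h : EqOps m l l')
    {c d : C} {m' : ℕ} (hm' : m' ≤ m) (hc : CondPrefixTransfer (l ++ μ) c d m') :
    CondPrefixTransfer (l' ++ μ) c d m' := by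
  rw [condPrefixTransfer_append] at hc ⊢
  rcases hc with h1 | ⟨p, hp, e, m₁, m₂, hm, h1, h2⟩
  · exact Or.inl (((h c d m' hm').2.2.2).mp h1)
  · exact Or.inr ⟨p, hp, e, m₁, m₂, hm, ((h c e m₁ (by omega)).2.2.1).mp h1, h2⟩

end AuxLemmas

/-- `≡_m^ops` is a congruence: an equivalence relation compatible with appending
label sequences on the right. -/
theorem eqOps_congruence {C : Type*} [Fintype C] (m : ℕ) :
    Equivalence (EqOps (C := C) m) ∧
    ∀ l l' μ : List (List (CounterOp C)), EqOps m l l' → EqOps m (l ++ μ) (l' ++ μ) := by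
  constructor
  · refine ⟨fun l c d m' _ => ⟨Iff.rfl, Iff.rfl, Iff.rfl, Iff.rfl⟩, fun h => eqOps_symm h, ?_⟩
    intro l₁ l₂ l₃ h h' c d m' hm'
    obtain ⟨h1, h2, h3, h4⟩ := h c d m' hm'
    obtain ⟨h1', h2', h3', h4'⟩ := h' c d m' hm'
    exact ⟨h1.trans h1', h2.trans h2', h3.trans h3', h4.trans h4'⟩
  · intro l l' μ h c d m' hm'
    exact ⟨⟨eqOps_infix_mp h hm', eqOps_infix_mp (eqOps_symm h) hm'⟩,
      ⟨eqOps_suffix_mp h hm', eqOps_suffix_mp (eqOps_symm h) hm'⟩,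
      ⟨eqOps_transfer_mp h hm', eqOps_transfer_mp (eqOps_symm h) hm'⟩,
      ⟨eqOps_prefix_mp h hm', eqOps_prefix_mp (eqOps_symm h) hm'⟩⟩
end
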